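/- (Riemann–Roch theorem for graphs) Let G be a finite connected simple graph of genus g = |E(G)| − |V(G)| + 1, let D be a divisor on G, and let K be the canonical divisor given by K(v) = deg(v) − 2 for every vertex v. Then r(D) − r(K − D) = deg(D) − g + 1, where r denotes the rank of a divisor. -/

import Mathlib

open Finset
open scoped Classical

namespace SimpleGraph

variable {V : Type*}

/-- A divisor `D : V → ℤ` is effective if all its values are nonnegative. -/
def Effective (D : V → ℤ) : Prop := ∀ v, 0 ≤ D v

/-- The Laplacian of `G` applied to `x : V → ℤ`:
`(lap G x) v = deg(v)·x(v) − ∑_{u ~ v} x(u) = ∑_{u ~ v} (x v − x u)`. -/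
noncomputable def lap [Fintype V] (G : SimpleGraph V) (x : V → ℤ) : V → ℤ :=
  fun v => ∑ u, if G.Adj v u then x v - x u else 0

/-- Two divisors are (linearly) equivalent if they differ by a Laplacian image. -/
def LinEquiv [Fintype V] (G : SimpleGraph V) (D D' : V → ℤ) : Prop :=
  ∃ x : V → ℤ, D - D' = G.lap x

/-- A divisor has positive rank if for every vertex `v`, subtracting one chip at `v`
yields a divisor equivalent to an effective divisor. -/
def PosRank [Fintype V] (G : SimpleGraph V) (D : V → ℤ) : Prop :=
  ∀ v : V, ∃ E : V → ℤ, Effective E ∧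
    G.LinEquiv (D - fun u => if u = v then (1 : ℤ) else 0) E

/-- The gonality of `G`: the minimum degree of an effective divisor of positive rank. -/
noncomputable def gonality [Fintype V] (G : SimpleGraph V) : ℕ :=
  sInf {n : ℕ | ∃ D : V → ℤ, Effective D ∧ G.PosRank D ∧ (∑ v, D v) = (n : ℤ)}

/-- The genus of `G`: `|E| − |V| + 1`. -/
noncomputable def genus [Fintype V] (G : SimpleGraph V) : ℤ :=
  (Nat.card G.edgeSet : ℤ) - (Fintype.card V : ℤ) + 1

end SimpleGraph

open SimpleGraph

namespace SimpleGraph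

variable {V : Type*}

/-- The rank of a divisor: `−1` if `D` is not equivalent to any effective divisor, and
otherwise the largest `r ≥ 0` such that for every effective divisor `F` of degree `r`,
`D − F` is equivalent to an effective divisor. -/
noncomputable def rank [Fintype V] (G : SimpleGraph V) (D : V → ℤ) : ℤ :=
  if ∃ E : V → ℤ, Effective E ∧ G.LinEquiv D E then
    sSup {r : ℤ | 0 ≤ r ∧ ∀ F : V → ℤ, Effective F → (∑ v, F v) = r →
      ∃ E : V → ℤ, Effective E ∧ G.LinEquiv (D - F) E}
  else -1

/-- The canonical divisor: `K(v) = deg(v) − 2`. -/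
noncomputable def canonical [Fintype V] (G : SimpleGraph V) : V → ℤ :=
  fun v => (∑ u, if G.Adj v u then (1 : ℤ) else 0) - 2

end SimpleGraph

/-!
The argument of Baker and Norine. For an ordering `σ` of the vertices let `ν_σ(v)` be the
number of neighbours of `v` preceding it, minus one. These divisors are unwinnable (look at the
first vertex where a firing vector is maximal), have degree `g - 1`, and `K - ν_σ` is `ν` of the
reversed ordering.

Every divisor is equivalent to a `q`-reduced one: minimise the energy `∑ E v * w v` over the
divisors `E ≥ 0` off `q` in the class, where `Δw > 0` off `q`; since the Laplacian is
self-adjoint, firing a set avoiding `q` would lower the energy. Dhar's burning algorithm then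
dominates a reduced divisor with `E q < 0` by some `ν_σ`. Hence every unwinnable divisor is
equivalent to one below some `ν_σ`.

With `r(D) + 1` the least degree of an effective `F` making `D - F` unwinnable, pick such an `F`
for `K - D` and `K - D - F ≡ H ≤ ν_σ`. Then `D - (ν_σ - H) ≡ ν_{σ reversed} - F` is unwinnable,
so `r(D) < deg (ν_σ - H) = r(K - D) + deg D - g + 2`. Applying this also to `K - D` gives the
equality.
-/

namespace SimpleGraph

variable {V : Type*} [Fintype V] {G : SimpleGraph V}

section Laplacian

open Matrix

theorem lap_eq_lapMatrix_mulVec (x : V → ℤ) : G.lap x = G.lapMatrix ℤ *ᵥ x := by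
  ext v
  rw [lapMatrix_mulVec_apply, lap, degree_eq_sum_if_adj (R := ℤ), Finset.sum_mul,
    neighborFinset_eq_filter, Finset.sum_filter, ← Finset.sum_sub_distrib]
  congr! 1 with u
  split_ifs <;> ring

theorem lap_add (x y : V → ℤ) : G.lap (x + y) = G.lap x + G.lap y := by
  simp only [lap_eq_lapMatrix_mulVec, mulVec_add]

theorem lap_neg (x : V → ℤ) : G.lap (-x) = -G.lap x := by
  simp only [lap_eq_lapMatrix_mulVec, mulVec_neg]

theorem lap_smul (c : ℤ) (x : V → ℤ) : G.lap (c • x) = c • G.lap x := by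
  simp only [lap_eq_lapMatrix_mulVec, mulVec_smul]

theorem lap_zero : G.lap 0 = 0 := by
  simpa using lap_smul (G := G) 0 0

theorem sum_lap_mul (x y : V → ℤ) : ∑ v, G.lap x v * y v = ∑ v, x v * G.lap y v := by
  change G.lap x ⬝ᵥ y = x ⬝ᵥ G.lap y
  rw [lap_eq_lapMatrix_mulVec, lap_eq_lapMatrix_mulVec, dotProduct_comm, dotProduct_mulVec,
    ← mulVec_transpose, (isSymm_lapMatrix ℤ G).eq, dotProduct_comm]

theorem sum_lap (x : V → ℤ) : ∑ v, G.lap x v = 0 := by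
  simpa [lap] using sum_lap_mul (G := G) x 1

end Laplacian

namespace LinEquiv

variable {D D' D'' : V → ℤ}

@[refl]
theorem refl (D : V → ℤ) : G.LinEquiv D D :=
  ⟨0, by rw [sub_self, lap_zero]⟩

@[symm]
theorem symm : G.LinEquiv D D' → G.LinEquiv D' D := fun ⟨x, hx⟩ =>
  ⟨-x, by rw [lap_neg, ← hx, neg_sub]⟩

@[trans]
theorem trans : G.LinEquiv D D' → G.LinEquiv D' D'' → G.LinEquiv D D'' := fun ⟨x, hx⟩ ⟨y, hy⟩ =>
  ⟨x + y, by rw [lap_add, ← hx, ← hy, sub_add_sub_cancel]⟩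

theorem sum_eq : G.LinEquiv D D' → ∑ v, D v = ∑ v, D' v := fun ⟨x, hx⟩ => by
  rw [← sub_eq_zero, ← Finset.sum_sub_distrib, ← sum_lap (G := G) x, ← hx]
  rfl

end LinEquiv

theorem linEquiv_sub_lap (D x : V → ℤ) : G.LinEquiv D (D - G.lap x) :=
  ⟨x, sub_sub_cancel D _⟩

theorem Effective.eq_zero_of_sum_eq_zero {F : V → ℤ} (hF : Effective F) (h : ∑ v, F v = 0) :
    F = 0 :=
  funext fun v => (Finset.sum_eq_zero_iff_of_nonneg fun u _ => hF u).1 h v (mem_univ v)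

def Winnable (G : SimpleGraph V) (D : V → ℤ) : Prop :=
  ∃ E, Effective E ∧ G.LinEquiv D E

namespace Winnable

variable {D D' : V → ℤ}

theorem of_linEquiv (h : G.LinEquiv D D') : G.Winnable D → G.Winnable D' :=
  fun ⟨E, hE, hDE⟩ => ⟨E, hE, h.symm.trans hDE⟩

theorem mono (h : D ≤ D') : G.Winnable D → G.Winnable D' := fun ⟨E, hE, x, hx⟩ =>
  ⟨E + (D' - D), fun v => add_nonneg (hE v) (sub_nonneg.2 (h v)), x, by rw [← hx]; abel⟩

theorem sum_nonneg : G.Winnable D → 0 ≤ ∑ v, D v := fun ⟨_, hE, hDE⟩ =>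
  hDE.sum_eq ▸ Finset.sum_nonneg fun v _ => hE v

end Winnable

theorem sum_canonical : ∑ v, G.canonical v = 2 * G.genus - 2 := by
  simp only [canonical, genus, Finset.sum_sub_distrib, ← degree_eq_sum_if_adj, ← Nat.cast_sum,
    sum_degrees_eq_twice_card_edges, edgeFinset_card, Nat.card_eq_fintype_card, sum_const,
    card_univ, nsmul_eq_mul]
  push_cast
  ring

theorem sum_boole_le_sum_boole {p p' : V → Prop} [DecidablePred p] [DecidablePred p']
    (h : ∀ u, p u → p' u) :
    (∑ u, if p u then 1 else 0 : ℤ) ≤ ∑ u, if p' u then 1 else 0 :=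
  Finset.sum_le_sum fun u _ => by split_ifs <;> simp_all

section Orientation

variable {α : Type*} [LinearOrder α]

/-- Baker–Norine's divisor `ν_O` of the acyclic orientation `O` directing every edge towards
the endpoint with the larger `σ`-value. -/
noncomputable def orientationDivisor (G : SimpleGraph V) (σ : V → α) : V → ℤ :=
  fun v => (∑ u, if G.Adj v u ∧ σ u < σ v then 1 else 0) - 1

theorem not_winnable_orientationDivisor [Nonempty V] (σ : V → α) :
    ¬ G.Winnable (G.orientationDivisor σ) := by
  rintro ⟨E, hE, x, hx⟩
  obtain ⟨m, -, hm⟩ := Finset.exists_max_image univ x univ_nonempty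
  obtain ⟨v, hv, hvmin⟩ := Finset.exists_min_image {u | x u = x m} σ ⟨m, by simp⟩
  simp only [mem_filter, mem_univ, true_and] at hv hvmin
  -- `v` is the `σ`-first maximiser of `x`, so `x` is strictly smaller at its earlier neighbours
  have hlap : (∑ u, if G.Adj v u ∧ σ u < σ v then 1 else 0) ≤ G.lap x v := by
    refine Finset.sum_le_sum fun u _ => ?_
    have hu := hm u (mem_univ u)
    have : σ u < σ v → x u ≠ x m := fun h hu => (hvmin u hu).not_gt h
    split_ifs <;> grind
  have := hE v
  have := congrFun hx v
  simp only [orientationDivisor, Pi.sub_apply] at *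
  omega

theorem orientationDivisor_add_reverse {σ : V → α} (hσ : Function.Injective σ) :
    G.orientationDivisor σ + G.orientationDivisor (OrderDual.toDual ∘ σ) = G.canonical := by
  ext v
  simp only [orientationDivisor, canonical, Pi.add_apply, Function.comp_apply,
    OrderDual.toDual_lt_toDual]
  rw [show ∀ a b : ℤ, a - 1 + (b - 1) = a + b - 2 by intros; ring, ← Finset.sum_add_distrib]
  congr 1
  refine Finset.sum_congr rfl fun u _ => ?_
  by_cases huv : G.Adj v u
  · rcases (hσ.ne (G.ne_of_adj huv).symm).lt_or_gt with h | h <;>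
      simp [huv, h, h.not_gt]
  · simp [huv]

theorem sum_orientationDivisor_reverse (σ : V → α) :
    ∑ v, G.orientationDivisor (OrderDual.toDual ∘ σ) v = ∑ v, G.orientationDivisor σ v := by
  simp only [orientationDivisor, Function.comp_apply, OrderDual.toDual_lt_toDual,
    Finset.sum_sub_distrib]
  rw [Finset.sum_comm]
  simp only [G.adj_comm]

theorem sum_orientationDivisor {σ : V → α} (hσ : Function.Injective σ) :
    ∑ v, G.orientationDivisor σ v = G.genus - 1 := by
  have h := congrArg (fun D => ∑ v, D v) (G.orientationDivisor_add_reverse hσ)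
  simp only [Pi.add_apply, Finset.sum_add_distrib, sum_orientationDivisor_reverse,
    sum_canonical] at h
  omega

end Orientation

theorem Connected.dist_lt_card (hG : G.Connected) (u v : V) : G.dist u v < Fintype.card V := by
  obtain ⟨p, hp, hlen⟩ := hG.exists_path_of_dist u v
  exact hlen ▸ hp.length_lt

omit [Fintype V] in
theorem Connected.exists_adj_dist_add_one (hG : G.Connected) {v q : V} (hvq : v ≠ q) :
    ∃ u, G.Adj v u ∧ G.dist u q + 1 = G.dist v q := by
  obtain ⟨p, hp⟩ := exists_walk_of_dist_ne_zero
    (dist_ne_zero_iff_ne_and_reachable.2 ⟨hvq, hG.preconnected v q⟩)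
  cases p with
  | nil => exact absurd rfl hvq
  | @cons _ u _ hadj p =>
    refine ⟨u, hadj, le_antisymm ?_ ?_⟩
    · have := dist_le p
      simp only [Walk.length_cons] at hp
      omega
    · have := hG.dist_triangle (u := v) (v := u) (w := q)
      rw [dist_eq_one_iff_adj.2 hadj] at this
      omega

/-- Weights increasing with the distance to `q`, with increments shrinking by the factor
`|V| + 1`: the increment towards a closer neighbour then outweighs the decrements towards all
farther ones. -/
noncomputable def distPotential (G : SimpleGraph V) (q : V) : V → ℤ :=
  fun v => ((Fintype.card V : ℤ) + 1) ^ Fintype.card V -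
    ((Fintype.card V : ℤ) + 1) ^ (Fintype.card V - G.dist v q)

theorem distPotential_self (q : V) : G.distPotential q q = 0 := by
  simp [distPotential]

theorem distPotential_nonneg (q v : V) : 0 ≤ G.distPotential q v := by
  simp only [distPotential, sub_nonneg]
  exact pow_le_pow_right₀ (by omega) (Nat.sub_le _ _)

theorem distPotential_sub_distPotential (q u v : V) :
    G.distPotential q v - G.distPotential q u =
      ((Fintype.card V : ℤ) + 1) ^ (Fintype.card V - G.dist u q) -
        ((Fintype.card V : ℤ) + 1) ^ (Fintype.card V - G.dist v q) := by
  simp only [distPotential]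
  ring

theorem one_le_lap_distPotential (hG : G.Connected) {q v : V} (hvq : v ≠ q) :
    1 ≤ G.lap (G.distPotential q) v := by
  simp only [lap, distPotential_sub_distPotential]
  set n := Fintype.card V
  set M : ℤ := n + 1 with hM
  obtain ⟨u₀, hvu₀, hu₀⟩ := hG.exists_adj_dist_add_one hvq
  have hd := hG.dist_lt_card v q
  set k := n - 1 - G.dist v q
  have hv : M ^ (n - G.dist v q) = M * M ^ k := by
    rw [← pow_succ']; congr 1; omega
  have hMk : 1 ≤ M ^ k := one_le_pow₀ (by omega)
  have hn : 1 ≤ (n : ℤ) := by exact_mod_cast Fintype.card_pos_iff.2 ⟨v⟩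
  -- a neighbour is at most one step farther from `q`, so it costs at most `n * M ^ k`
  have hterm : ∀ u, -(n * M ^ k) ≤
      if G.Adj v u then M ^ (n - G.dist u q) - M ^ (n - G.dist v q) else 0 := by
    intro u
    split_ifs with hvu
    · have := hG.dist_triangle (u := u) (v := v) (w := q)
      rw [dist_eq_one_iff_adj.2 hvu.symm] at this
      have : M ^ k ≤ M ^ (n - G.dist u q) := pow_le_pow_right₀ (by omega) (by omega)
      rw [hv, hM]
      nlinarith
    · nlinarith
  have hterm₀ : M ^ (n - G.dist u₀ q) - M ^ (n - G.dist v q) = n * (M * M ^ k) := by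
    have hu : M ^ (n - G.dist u₀ q) = M * (M * M ^ k) := by
      rw [← pow_succ', ← pow_succ']; congr 1; omega
    rw [hu, hv, hM]
    ring
  have hrest := Finset.card_nsmul_le_sum (univ.erase u₀) _ _ fun u _ => hterm u
  have hcard : (#(univ.erase u₀) : ℤ) * (n * M ^ k) ≤ n * (n * M ^ k) :=
    mul_le_mul_of_nonneg_right (by exact_mod_cast card_le_univ _) (by positivity)
  have : (n : ℤ) * (M * M ^ k) = n * (n * M ^ k) + n * M ^ k := by rw [hM]; ring
  rw [← Finset.add_sum_erase _ _ (mem_univ u₀), if_pos hvu₀, hterm₀]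
  rw [nsmul_eq_mul] at hrest
  nlinarith

theorem exists_linEquiv_nonneg_off (hG : G.Connected) (q : V) (D : V → ℤ) :
    ∃ E, G.LinEquiv D E ∧ ∀ v ≠ q, 0 ≤ E v := by
  set N := ∑ v, |D v|
  refine ⟨D - G.lap (-N • G.distPotential q), linEquiv_sub_lap _ _, fun v hvq => ?_⟩
  have h₁ := one_le_lap_distPotential hG hvq
  have h₂ : |D v| ≤ N := Finset.single_le_sum (fun u _ => abs_nonneg (D u)) (mem_univ v)
  have h₃ := neg_abs_le (D v)
  have h₄ := mul_le_mul_of_nonneg_left h₁ ((abs_nonneg _).trans h₂)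
  simp only [lap_smul, Pi.sub_apply, Pi.smul_apply, smul_eq_mul]
  linarith

/-- `q`-reduced: firing any nonempty set of vertices avoiding `q` sends one of them into debt. -/
def IsReduced (G : SimpleGraph V) (q : V) (E : V → ℤ) : Prop :=
  (∀ v ≠ q, 0 ≤ E v) ∧ ∀ S : Finset V, S.Nonempty → q ∉ S →
    ∃ v ∈ S, E v < ∑ u, if G.Adj v u ∧ u ∉ S then 1 else 0

theorem lap_indicator_of_mem {S : Finset V} {v : V} (hv : v ∈ S) :
    G.lap (fun u => if u ∈ S then 1 else 0) v = ∑ u, if G.Adj v u ∧ u ∉ S then 1 else 0 :=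
  Finset.sum_congr rfl fun u _ => by by_cases u ∈ S <;> simp [*]

theorem lap_indicator_nonpos_of_notMem {S : Finset V} {v : V} (hv : v ∉ S) :
    G.lap (fun u => if u ∈ S then 1 else 0) v ≤ 0 :=
  Finset.sum_nonpos fun u _ => by by_cases u ∈ S <;> split_ifs <;> simp_all

theorem exists_linEquiv_isReduced (hG : G.Connected) (q : V) (D : V → ℤ) :
    ∃ E, G.LinEquiv D E ∧ G.IsReduced q E := by
  set w := G.distPotential q
  obtain ⟨_, ⟨E, ⟨hDE, hE⟩, rfl⟩, hmin⟩ := Int.exists_least_of_bdd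
    (P := fun b => ∃ E, (G.LinEquiv D E ∧ ∀ v ≠ q, 0 ≤ E v) ∧ ∑ v, E v * w v = b)
    ⟨0, by
      rintro _ ⟨E, ⟨-, hE⟩, rfl⟩
      refine Finset.sum_nonneg fun v _ => ?_
      obtain rfl | hvq := eq_or_ne v q
      · simp [w, distPotential_self]
      · exact mul_nonneg (hE v hvq) (distPotential_nonneg q v)⟩
    (let ⟨E, hE⟩ := exists_linEquiv_nonneg_off hG q D; ⟨_, E, hE, rfl⟩)
  refine ⟨E, hDE, hE, fun S hS hqS => ?_⟩
  by_contra! hlegal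
  set χ : V → ℤ := fun u => if u ∈ S then 1 else 0
  have hfired : ∀ v ≠ q, 0 ≤ (E - G.lap χ) v := by
    intro v hvq
    by_cases hv : v ∈ S
    · simpa [χ, lap_indicator_of_mem hv] using hlegal v hv
    · simpa using (hE v hvq).trans (le_sub_self_iff _ |>.2 (lap_indicator_nonpos_of_notMem hv))
  -- by self-adjointness, firing `S` lowers the energy by `∑ v ∈ S, lap w v > 0`
  have hdrop : 0 < ∑ v, G.lap χ v * w v := by
    rw [sum_lap_mul]
    simp only [χ, ite_mul, one_mul, zero_mul, Finset.sum_ite_mem, univ_inter]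
    exact Finset.sum_pos (fun v hv => one_pos.trans_le
      (one_le_lap_distPotential hG fun h => hqS (h ▸ hv))) hS
  have := hmin _ ⟨E - G.lap χ, ⟨hDE.trans (linEquiv_sub_lap E χ), hfired⟩, rfl⟩
  simp only [Pi.sub_apply, sub_mul, Finset.sum_sub_distrib] at this
  omega

noncomputable def moveToFront (σ : V → ℕ) (v : V) : V → ℕ :=
  fun u => if u = v then 0 else σ u + 1

omit [Fintype V] in
theorem moveToFront_injective {σ : V → ℕ} (hσ : Function.Injective σ) (v : V) :
    Function.Injective (moveToFront σ v) := by
  intro a b h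
  simp only [moveToFront] at h
  split_ifs at h with ha hb hb <;> first | exact ha.trans hb.symm | omega | exact hσ (by omega)

omit [Fintype V] in
theorem moveToFront_lt_moveToFront {σ : V → ℕ} {u v w : V} (hw : w ≠ v) :
    moveToFront σ v u < moveToFront σ v w ↔ u = v ∨ σ u < σ w := by
  simp only [moveToFront, hw, if_false]
  split_ifs <;> simp_all

omit [Fintype V] in
theorem not_moveToFront_lt_self (σ : V → ℕ) (u v : V) :
    ¬ moveToFront σ v u < moveToFront σ v v := by
  simp [moveToFront]

-- Dhar's burning algorithm, with `σ` recording the order in which `S` burns.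
theorem exists_burning_order {E : V → ℤ} (S : Finset V)
    (hS : ∀ T ⊆ S, T.Nonempty → ∃ v ∈ T, E v < ∑ u, if G.Adj v u ∧ u ∉ T then 1 else 0) :
    ∃ σ : V → ℕ, Function.Injective σ ∧
      ∀ v ∈ S, E v < ∑ u, if G.Adj v u ∧ (u ∉ S ∨ σ u < σ v) then 1 else 0 := by
  induction S using Finset.strongInduction with
  | H S ih =>
  obtain rfl | hne := S.eq_empty_or_nonempty
  · exact ⟨fun v => Fintype.equivFin V v, fun a b h => (Fintype.equivFin V).injective (Fin.ext h),
      by simp⟩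
  obtain ⟨v, hvS, hv⟩ := hS S subset_rfl hne
  obtain ⟨σ, hσ, hburn⟩ := ih (S.erase v) (erase_ssubset hvS)
    fun T hT => hS T (hT.trans (erase_subset v S))
  refine ⟨moveToFront σ v, moveToFront_injective hσ v, fun w hw => ?_⟩
  obtain rfl | hwv := eq_or_ne w v
  · exact hv.trans_le (sum_boole_le_sum_boole fun u hu => ⟨hu.1, Or.inl hu.2⟩)
  refine (hburn w (mem_erase.2 ⟨hwv, hw⟩)).trans_le (sum_boole_le_sum_boole fun u hu => ?_)
  simp only [moveToFront_lt_moveToFront hwv, mem_erase] at hu ⊢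
  tauto

theorem IsReduced.exists_le_orientationDivisor {q : V} {E : V → ℤ} (hE : G.IsReduced q E)
    (hq : E q < 0) : ∃ σ : V → ℕ, Function.Injective σ ∧ E ≤ G.orientationDivisor σ := by
  obtain ⟨σ, hσ, hburn⟩ := exists_burning_order (G := G) (E := E) (univ.erase q)
    fun T hT hne => hE.2 T hne fun hqT => (mem_erase.1 (hT hqT)).1 rfl
  refine ⟨moveToFront σ q, moveToFront_injective hσ q, fun v => ?_⟩
  simp only [orientationDivisor]
  obtain rfl | hvq := eq_or_ne v q
  · simp only [not_moveToFront_lt_self, and_false, if_false, sum_const_zero]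
    omega
  · have := hburn v (by simpa using hvq)
    simp only [mem_erase, mem_univ, and_true, not_not, ← moveToFront_lt_moveToFront hvq] at this
    omega

theorem exists_linEquiv_le_orientationDivisor (hG : G.Connected) {D : V → ℤ}
    (hD : ¬ G.Winnable D) :
    ∃ σ : V → ℕ, Function.Injective σ ∧ ∃ H, G.LinEquiv D H ∧ H ≤ G.orientationDivisor σ := by
  obtain ⟨q⟩ := hG.nonempty
  obtain ⟨E, hDE, hE⟩ := exists_linEquiv_isReduced hG q D
  have hq : E q < 0 := by
    by_contra! hq
    exact hD ⟨E, fun v => (eq_or_ne v q).elim (· ▸ hq) (hE.1 v), hDE⟩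
  obtain ⟨σ, hσ, hle⟩ := hE.exists_le_orientationDivisor hq
  exact ⟨σ, hσ, E, hDE, hle⟩

section Rank

variable [Nonempty V] {D : V → ℤ}

theorem winnable_sub_of_sum_le {r : ℤ}
    (hr : ∀ F, Effective F → ∑ v, F v = r → G.Winnable (D - F)) {F : V → ℤ} (hF : Effective F)
    (hle : ∑ v, F v ≤ r) : G.Winnable (D - F) := by
  obtain ⟨v₀⟩ := ‹Nonempty V›
  have hsingle : 0 ≤ (Pi.single v₀ (r - ∑ u, F u) : V → ℤ) := Pi.single_nonneg.2 (by omega)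
  set F' := F + Pi.single v₀ (r - ∑ u, F u)
  have hF' : Effective F' := fun v => add_nonneg (hF v) (hsingle v)
  refine (hr F' hF' ?_).mono fun v => sub_le_sub_left (le_add_of_nonneg_right (hsingle v)) (D v)
  simp [F', Finset.sum_add_distrib]

theorem rank_lt_sum {F : V → ℤ} (hF : Effective F) (hDF : ¬ G.Winnable (D - F)) :
    G.rank D < ∑ v, F v := by
  have hF₀ : 0 ≤ ∑ v, F v := Finset.sum_nonneg fun v _ => hF v
  unfold rank
  split_ifs with hD
  · rw [Int.lt_iff_add_one_le, ← le_sub_iff_add_le]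
    refine csSup_le ⟨0, le_rfl, fun F₀ hF₀ h => ?_⟩ fun r ⟨_, hr⟩ => ?_
    · rwa [hF₀.eq_zero_of_sum_eq_zero h, sub_zero]
    · by_contra! hlt
      exact hDF (winnable_sub_of_sum_le hr hF (by omega))
  · omega

theorem exists_sum_eq_rank_add_one (D : V → ℤ) :
    ∃ F, Effective F ∧ ∑ v, F v = G.rank D + 1 ∧ ¬ G.Winnable (D - F) := by
  unfold rank
  split_ifs with hD
  · set R := {r : ℤ | 0 ≤ r ∧ ∀ F : V → ℤ, Effective F → ∑ v, F v = r →
      ∃ E : V → ℤ, Effective E ∧ G.LinEquiv (D - F) E}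
    have h₀ : 0 ∈ R := ⟨le_rfl, fun F hF h => by rwa [hF.eq_zero_of_sum_eq_zero h, sub_zero]⟩
    have hbdd : BddAbove R := ⟨∑ v, D v, fun r ⟨hr₀, hr⟩ => by
      obtain ⟨v₀⟩ := ‹Nonempty V›
      have hF : 0 ≤ (Pi.single v₀ r : V → ℤ) := Pi.single_nonneg.2 hr₀
      have := Winnable.sum_nonneg (hr _ hF (by simp))
      simpa [Finset.sum_sub_distrib] using this⟩
    have hs : sSup R + 1 ∉ R := fun h => by linarith [le_csSup hbdd h]
    simp only [R, Set.mem_ofPred_eq, not_and, not_forall] at hs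
    obtain ⟨F, hF, hsum, hnw⟩ := hs (by linarith [le_csSup hbdd h₀])
    exact ⟨F, hF, hsum, hnw⟩
  · exact ⟨0, fun _ => le_rfl, by simp, by rwa [sub_zero]⟩

end Rank

theorem rank_le_rank_canonical_sub (hG : G.Connected) (D : V → ℤ) :
    G.rank D ≤ G.rank (G.canonical - D) + (∑ v, D v) - G.genus + 1 := by
  have := hG.nonempty
  obtain ⟨F, hF, hFsum, hKDF⟩ := exists_sum_eq_rank_add_one (G := G) (G.canonical - D)
  obtain ⟨σ, hσ, H, hH, hHν⟩ := exists_linEquiv_le_orientationDivisor hG hKDF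
  set ν := G.orientationDivisor σ
  set ν' := G.orientationDivisor (OrderDual.toDual ∘ σ)
  have hνν' : ν + ν' = G.canonical := orientationDivisor_add_reverse hσ
  have hequiv : G.LinEquiv (D - (ν - H)) (ν' - F) := by
    obtain ⟨x, hx⟩ := hH.symm
    exact ⟨x, by rw [← hx, ← hνν']; abel⟩
  have hlt := rank_lt_sum (G := G) (D := D) (sub_nonneg.2 hHν) fun hw =>
    not_winnable_orientationDivisor (G := G) (OrderDual.toDual ∘ σ)
      ((hw.of_linEquiv hequiv).mono fun v => sub_le_self _ (hF v))
  have hHsum := hH.sum_eq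
  simp only [Pi.sub_apply, Finset.sum_sub_distrib, sum_canonical] at hlt hHsum
  rw [sum_orientationDivisor hσ] at hlt
  omega

end SimpleGraph

/-- The Riemann–Roch theorem for graphs. -/
theorem riemannRoch_graph {V : Type*} [Fintype V]
    (G : SimpleGraph V) (hG : G.Connected) (D : V → ℤ) :
    G.rank D - G.rank (G.canonical - D) = (∑ v, D v) - G.genus + 1 := by
  have h₁ := G.rank_le_rank_canonical_sub hG D
  have h₂ := G.rank_le_rank_canonical_sub hG (G.canonical - D)
  simp only [sub_sub_cancel, Pi.sub_apply, Finset.sum_sub_distrib, sum_canonical] at h₂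
  omega
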